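/- Let f : X → Y be a continuous map, X a path-connected normal topological space, and let {U_0', …, U_n'} be a uniformly f-contractible open cover of X. Then there exists an infinite open (n+1)-cover (U_k)_{k=0}^∞ of X with U_k = U_k' for k ≤ n such that for every m ≥ n, the finite family {U_0, …, U_m} is a uniformly f-contractible (n+1)-cover of X; moreover, for each k > n, U_k is a disjoint union of open sets V_0 ∪ … ∪ V_n with V_i ⊆ U_i'. -/

import Mathlib

open Set Topology

/-- A subset `U` of a topological space `X` is `X`-contractible if the inclusion
`U ↪ X` is nullhomotopic (i.e. `U` can be contracted to a point within `X`). -/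
def ContractibleIn {X : Type*} [TopologicalSpace X] (U : Set X) : Prop :=
  ContinuousMap.Nullhomotopic (⟨fun x => (x : X), continuous_subtype_val⟩ : C(U, X))

/-- A family `U` of subsets of `X` is uniformly `f`-contractible if every `y ∈ Y` has a
neighborhood `V` such that each `U i ∩ f ⁻¹' V` is `X`-contractible. -/
def UnifContractible {X Y : Type*} [TopologicalSpace X] [TopologicalSpace Y]
    (f : X → Y) {ι : Type*} (U : ι → Set X) : Prop :=
  ∀ y : Y, ∃ V ∈ 𝓝 y, ∀ i, ContractibleIn (U i ∩ f ⁻¹' V)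

/-!
Take a partition of unity `ρ₀, …, ρₙ` subordinate to `U'` with prefix sums
`0 = S₀ ≤ S₁ ≤ ⋯ ≤ Sₙ₊₁ = 1`, so that at each point `x` the segment `[0, 1]` is cut into the
consecutive intervals `[Sᵢ x, Sᵢ₊₁ x]` of lengths `ρᵢ x`. Fix distinct thresholds `c_k ∈ (0, 1)`
and, for `k > n`, let `U_k` consist of the points `x` at which `c_k` lies in the interior of some
interval; the points where it lies in the interior of the `i`-th one form an open set
`Vᵢ ⊆ supp ρᵢ`, and these are disjoint. If `x` misses `U_k` for `k > n`, then `c_k` is the right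
end of an interval of positive length other than the one reaching `1`; if `x` misses `U'_k`, the
`k`-th interval is degenerate. Sending the missed indices to these intervals is injective, so at
most `n` members of the family miss `x`.

Since the `Vᵢ` are separated by disjoint open sets, contractions of the `Vᵢ ∩ f⁻¹' V` inside `X`,
all ending at a common point of the path-connected space `X`, glue to a contraction of
`U_k ∩ f⁻¹' V`.
-/

section Contractible

variable {X : Type*} [TopologicalSpace X]

theorem ContractibleIn.mono {U W : Set X} (h : ContractibleIn U) (hWU : W ⊆ U) :
    ContractibleIn W :=
  h.comp_left ⟨inclusion hWU, continuous_inclusion hWU⟩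

/-- In this form, contractions of pieces separated by disjoint open sets can be glued. -/
theorem contractibleIn_iff_exists_continuousOn [PathConnectedSpace X] {U : Set X} (p : X) :
    ContractibleIn U ↔ ∃ F : unitInterval × X → X, ContinuousOn F (univ ×ˢ U) ∧
      (∀ x ∈ U, F (0, x) = x) ∧ ∀ x ∈ U, F (1, x) = p := by
  constructor
  · rintro ⟨q, hq⟩
    obtain ⟨H⟩ := hq.trans ⟨(PathConnectedSpace.somePath q p).toHomotopyConst⟩
    classical
    refine ⟨fun z => if hz : z.2 ∈ U then H (z.1, ⟨z.2, hz⟩) else p, ?_,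
      fun x hx => by simp [hx], fun x hx => by simp [hx]⟩
    rw [continuousOn_iff_continuous_domRestrict]
    convert H.continuous.comp
      (f := fun z : ↥(univ ×ˢ U) => ((z : unitInterval × X).1, ⟨(z : unitInterval × X).2, z.2.2⟩))
      (by fun_prop) using 1
    funext z
    exact dif_pos z.2.2
  · rintro ⟨F, hF, h0, h1⟩
    exact ⟨p, ⟨{ toFun := fun z => F (z.1, z.2)
                 continuous_toFun := hF.comp_continuous (by fun_prop) fun z => ⟨trivial, z.2.2⟩
                 map_zero_left := fun x => h0 x x.2
                 map_one_left := fun x => h1 x x.2 }⟩⟩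

theorem ContractibleIn.iUnion_of_pairwise_disjoint [PathConnectedSpace X] {ι : Type*}
    {O S : ι → Set X} (hO : ∀ i, IsOpen (O i)) (hd : Pairwise (Function.onFun Disjoint O))
    (hSO : ∀ i, S i ⊆ O i) (hS : ∀ i, ContractibleIn (S i)) : ContractibleIn (⋃ i, S i) := by
  classical
  obtain ⟨p⟩ := PathConnectedSpace.nonempty (X := X)
  choose F hF h0 h1 using fun i => (contractibleIn_iff_exists_continuousOn p).1 (hS i)
  have index_eq {i j : ι} {x : X} (hi : x ∈ O i) (hj : x ∈ O j) : i = j :=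
    hd.eq (not_disjoint_iff.2 ⟨x, hi, hj⟩)
  let G : unitInterval × X → X := fun z => if h : ∃ i, z.2 ∈ O i then F h.choose z else z.2
  have hG {i : ι} {z : unitInterval × X} (hz : z.2 ∈ O i) : G z = F i z := by
    have h : ∃ i, z.2 ∈ O i := ⟨i, hz⟩
    simp only [G, dif_pos h, index_eq h.choose_spec hz]
  refine (contractibleIn_iff_exists_continuousOn p).2 ⟨G, ?_, ?_, ?_⟩
  · rintro ⟨t, x⟩ ⟨-, hx⟩
    obtain ⟨i, hi⟩ := mem_iUnion.1 hx
    have hnhds : univ ×ˢ O i ∈ 𝓝 (t, x) :=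
      prod_mem_nhds Filter.univ_mem ((hO i).mem_nhds (hSO i hi))
    have hFi : ContinuousWithinAt (F i) (univ ×ˢ (⋃ j, S j) ∩ univ ×ˢ O i) (t, x) := by
      refine (hF i (t, x) ⟨trivial, hi⟩).mono ?_
      rintro ⟨t', y⟩ ⟨hy, hyO⟩
      obtain ⟨j, hj⟩ := mem_iUnion.1 hy.2
      exact ⟨trivial, index_eq (hSO j hj) hyO.2 ▸ hj⟩
    exact ((continuousWithinAt_inter hnhds).1 hFi).congr_of_eventuallyEq
      (Filter.mem_of_superset (nhdsWithin_le_nhds hnhds) fun z hz => hG hz.2) (hG (hSO i hi))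
  · intro x hx
    obtain ⟨i, hi⟩ := mem_iUnion.1 hx
    rw [hG (hSO i hi), h0 i x hi]
  · intro x hx
    obtain ⟨i, hi⟩ := mem_iUnion.1 hx
    rw [hG (hSO i hi), h1 i x hi]

end Contractible

def extendFin {α : Type*} {n : ℕ} (a : Fin (n + 1) → α) (b : ℕ → α) (k : ℕ) : α :=
  if h : k ≤ n then a ⟨k, Nat.lt_succ_of_le h⟩ else b k

section UnifContractible

variable {X Y : Type*} [TopologicalSpace X] [TopologicalSpace Y] {f : X → Y}

theorem UnifContractible.comp {ι κ : Type*} {U : ι → Set X} (h : UnifContractible f U)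
    (e : κ → ι) : UnifContractible f (U ∘ e) :=
  fun y => (h y).imp fun _ ⟨hV, hU⟩ => ⟨hV, fun k => hU (e k)⟩

theorem UnifContractible.extendFin {n : ℕ} {U' : Fin (n + 1) → Set X} {W : ℕ → Set X}
    (hU' : UnifContractible f U') (hW : UnifContractible f W) :
    UnifContractible f (extendFin U' W) := by
  intro y
  obtain ⟨V₁, hV₁, h₁⟩ := hU' y
  obtain ⟨V₂, hV₂, h₂⟩ := hW y
  refine ⟨V₁ ∩ V₂, Filter.inter_mem hV₁ hV₂, fun k => ?_⟩
  unfold _root_.extendFin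
  split_ifs
  · exact (h₁ _).mono (inter_subset_inter_right _ (preimage_mono inter_subset_left))
  · exact (h₂ k).mono (inter_subset_inter_right _ (preimage_mono inter_subset_right))

theorem UnifContractible.iUnion_of_pairwise_disjoint [PathConnectedSpace X] {ι κ : Type*}
    {U : ι → Set X} (h : UnifContractible f U) {W : κ → ι → Set X}
    (hWo : ∀ k i, IsOpen (W k i)) (hWd : ∀ k, Pairwise (Function.onFun Disjoint (W k)))
    (hWU : ∀ k i, W k i ⊆ U i) : UnifContractible f fun k => ⋃ i, W k i := by
  intro y
  obtain ⟨V, hV, hUV⟩ := h y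
  refine ⟨V, hV, fun k => ?_⟩
  rw [iUnion_inter]
  exact .iUnion_of_pairwise_disjoint (hWo k) (hWd k) (fun i => inter_subset_left)
    fun i => (hUV i).mono (inter_subset_inter_left _ (hWU k i))

end UnifContractible

section Crossing

variable {α : Type*} [LinearOrder α]

theorem exists_lt_le_succ_of_lt_of_le {S : ℕ → α} {c : α} {N : ℕ} (h0 : S 0 < c) (hN : c ≤ S N) :
    ∃ i < N, S i < c ∧ c ≤ S (i + 1) := by
  induction N with
  | zero => exact absurd hN (not_le.2 h0)
  | succ N ih =>
    by_cases hc : c ≤ S N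
    · obtain ⟨i, hi, h⟩ := ih hc
      exact ⟨i, by omega, h⟩
    · exact ⟨N, N.lt_succ_self, not_le.1 hc, hN⟩

theorem card_le_of_degenerate_or_cutPoint {S : ℕ → α} {n : ℕ} (hS : S 0 < S (n + 1))
    {s : Finset ℕ} {c : ℕ → α} (hc : InjOn c s)
    (hdeg : ∀ k ∈ s, k ≤ n → S k = S (k + 1))
    (hcut : ∀ k ∈ s, n < k → c k ∈ Ioo (S 0) (S (n + 1)) ∧ ∀ i ≤ n, c k ∉ Ioo (S i) (S (i + 1))) :
    s.card ≤ n := by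
  obtain ⟨i₀, hi₀n, hi₀, hi₀'⟩ := exists_lt_le_succ_of_lt_of_le hS le_rfl
  have hend : ∀ k ∈ s, n < k → ∃ i < n + 1, S i < c k ∧ S (i + 1) = c k := by
    intro k hk hkn
    obtain ⟨⟨h0, h1⟩, hnot⟩ := hcut k hk hkn
    obtain ⟨i, hi, hlt, hle⟩ := exists_lt_le_succ_of_lt_of_le h0 h1.le
    exact ⟨i, hi, hlt, le_antisymm (not_lt.1 fun h => hnot i (by omega) ⟨hlt, h⟩) hle⟩
  choose! e he using hend
  have hdeg_ne : ∀ k ∈ s, k ≤ n → ∀ k' ∈ s, n < k' → k ≠ e k' := by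
    rintro k hk hkn k' hk' hkn' rfl
    obtain ⟨-, hlt, heq⟩ := he k' hk' hkn'
    exact (hlt.trans_le heq.ge).ne (hdeg _ hk hkn)
  -- Degenerate indices go to themselves and cut points to the interval they close; neither
  -- can be the interval `i₀` that reaches `S (n + 1)`.
  let φ : ℕ → ℕ := fun k => if k ≤ n then k else e k
  have hmaps : MapsTo φ s ((Finset.range (n + 1)).erase i₀) := by
    intro k hk
    simp only [Finset.coe_erase, Finset.coe_range, mem_sdiff, mem_Iio, mem_singleton_iff, φ]
    split_ifs with hkn
    · refine ⟨by omega, fun h => ?_⟩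
      subst h
      exact (hi₀.trans_le hi₀').ne (hdeg _ hk hkn)
    · obtain ⟨hi, -, heq⟩ := he k hk (not_le.1 hkn)
      refine ⟨hi, fun h => ?_⟩
      rw [h] at heq
      exact (hcut k hk (not_le.1 hkn)).1.2.not_ge (heq ▸ hi₀')
  have hinj : InjOn φ s := by
    intro k hk k' hk' h
    by_cases hkn : k ≤ n <;> by_cases hkn' : k' ≤ n <;>
      simp only [φ, hkn, hkn', if_true, if_false] at h
    · exact h
    · exact absurd h (hdeg_ne k hk hkn k' hk' (not_le.1 hkn'))
    · exact absurd h.symm (hdeg_ne k' hk' hkn' k hk (not_le.1 hkn))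
    · obtain ⟨-, -, heq⟩ := he k hk (not_le.1 hkn)
      obtain ⟨-, -, heq'⟩ := he k' hk' (not_le.1 hkn')
      exact hc hk hk' (heq.symm.trans (h ▸ heq'))
  simpa [Finset.card_erase_of_mem (Finset.mem_range.2 hi₀n)] using
    Finset.card_le_card_of_injOn φ hmaps hinj

end Crossing

section PrefixSum

variable {M : Type*} [AddCommMonoid M] {n : ℕ}

def prefixSum (a : Fin n → M) (j : ℕ) : M :=
  ∑ i ∈ Finset.univ.filter (fun i : Fin n => (i : ℕ) < j), a i

@[simp]
theorem prefixSum_zero (a : Fin n → M) : prefixSum a 0 = 0 := by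
  simp [prefixSum]

theorem prefixSum_self (a : Fin n → M) : prefixSum a n = ∑ i, a i := by
  simp [prefixSum]

theorem prefixSum_succ (a : Fin n → M) (i : Fin n) :
    prefixSum a (i + 1) = prefixSum a i + a i := by
  have : Finset.univ.filter (fun l : Fin n => (l : ℕ) < i + 1) =
      insert i (Finset.univ.filter fun l : Fin n => (l : ℕ) < i) := by
    ext l
    simp [Fin.ext_iff, le_iff_eq_or_lt]
  rw [prefixSum, this, Finset.sum_insert (by simp), add_comm, prefixSum]

theorem monotone_prefixSum [PartialOrder M] [IsOrderedAddMonoid M] {a : Fin n → M}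
    (ha : 0 ≤ a) : Monotone (prefixSum a) := fun _ _ hjk =>
  Finset.sum_le_sum_of_subset_of_nonneg
    (Finset.monotone_filter_right _ fun _ _ h => lt_of_lt_of_le h hjk) fun i _ _ => ha i

end PrefixSum

section ThresholdPiece

variable {X : Type*} [TopologicalSpace X] {n : ℕ}

def thresholdPiece (ρ : Fin n → C(X, ℝ)) (c : ℝ) (i : Fin n) : Set X :=
  {x | c ∈ Ioo (prefixSum (ρ · x) i) (prefixSum (ρ · x) (i + 1))}

theorem continuous_prefixSum (ρ : Fin n → C(X, ℝ)) (j : ℕ) :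
    Continuous fun x => prefixSum (ρ · x) j :=
  continuous_finsetSum _ fun i _ => (ρ i).continuous

theorem isOpen_thresholdPiece (ρ : Fin n → C(X, ℝ)) (c : ℝ) (i : Fin n) :
    IsOpen (thresholdPiece ρ c i) :=
  (isOpen_lt (continuous_prefixSum ρ _) continuous_const).inter
    (isOpen_lt continuous_const (continuous_prefixSum ρ _))

theorem pairwise_disjoint_thresholdPiece {ρ : Fin n → C(X, ℝ)} (hρ : ∀ i x, 0 ≤ ρ i x) (c : ℝ) :
    Pairwise (Function.onFun Disjoint (thresholdPiece ρ c)) := by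
  refine pairwise_disjoint_on _ |>.2 fun i j hij => disjoint_left.2 fun x hi hj => ?_
  have : prefixSum (ρ · x) (i + 1) ≤ prefixSum (ρ · x) j :=
    monotone_prefixSum (fun l => hρ l x) (Fin.lt_def.1 hij)
  exact (hi.2.trans_le this).not_gt hj.1

theorem thresholdPiece_subset_support (ρ : Fin n → C(X, ℝ)) (c : ℝ) (i : Fin n) :
    thresholdPiece ρ c i ⊆ Function.support (ρ i) := fun x hx h => by
  have := hx.1.trans hx.2
  rw [prefixSum_succ, h, add_zero] at this
  exact this.false

theorem iUnion_extendFin_thresholdPiece_eq_univ {U' : Fin (n + 1) → Set X}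
    (ρ : PartitionOfUnity (Fin (n + 1)) X univ) (hρU : ρ.IsSubordinate U')
    (c : ℕ ↪ Ioo (0 : ℝ) 1) {s : Finset ℕ} (hs : s.card = n + 1) :
    ⋃ k ∈ s, extendFin U' (fun k => ⋃ i, thresholdPiece ρ (c k) i) k = univ := by
  refine eq_univ_of_forall fun x => ?_
  by_contra hx
  simp only [mem_iUnion, not_exists] at hx
  have hS0 : prefixSum (ρ · x) 0 = 0 := prefixSum_zero _
  have hS1 : prefixSum (ρ · x) (n + 1) = 1 := by
    rw [prefixSum_self, ← finsum_eq_sum_of_fintype, ρ.sum_eq_one (mem_univ x)]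
  have := card_le_of_degenerate_or_cutPoint (S := prefixSum (ρ · x)) (s := s)
    (c := fun k => (c k : ℝ)) (by rw [hS0, hS1]; exact one_pos)
    (Subtype.val_injective.comp c.injective).injOn ?_ ?_
  · omega
  · intro k hk hkn
    have hxk := hx k hk
    rw [extendFin, dif_pos hkn] at hxk
    rw [prefixSum_succ _ ⟨k, Nat.lt_succ_of_le hkn⟩,
      image_eq_zero_of_notMem_tsupport fun h => hxk (hρU _ h), add_zero]
  · intro k hk hkn
    have hxk := hx k hk
    rw [extendFin, dif_neg (not_le.2 hkn), mem_iUnion, not_exists] at hxk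
    exact ⟨by rw [hS0, hS1]; exact (c k).2, fun i hi => hxk ⟨i, Nat.lt_succ_of_le hi⟩⟩

end ThresholdPiece

theorem exists_infinite_unifContractible_nSuccCover_extension_general
    {X Y : Type*} [TopologicalSpace X] [TopologicalSpace Y] [NormalSpace X]
    [PathConnectedSpace X] (f : X → Y)
    (n : ℕ) (U' : Fin (n + 1) → Set X)
    (hopen : ∀ i, IsOpen (U' i)) (hcover : ⋃ i, U' i = univ)
    (hunif : UnifContractible f U') :
    ∃ U : ℕ → Set X,
      (∀ k, IsOpen (U k)) ∧
      (∀ k : ℕ, ∀ hk : k ≤ n, U k = U' ⟨k, Nat.lt_succ_of_le hk⟩) ∧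
      (∀ k : ℕ, n < k → ∃ V : Fin (n + 1) → Set X,
        (∀ i, IsOpen (V i)) ∧ Pairwise (Function.onFun Disjoint V) ∧
        (∀ i, V i ⊆ U' i) ∧ U k = ⋃ i, V i) ∧
      (∀ m : ℕ, n ≤ m →
        UnifContractible f (fun i : Fin (m + 1) => U i) ∧
        (∀ s : Finset ℕ, (∀ k ∈ s, k ≤ m) → s.card = n + 1 → ⋃ k ∈ s, U k = univ)) := by
  obtain ⟨ρ, hρU⟩ := PartitionOfUnity.exists_isSubordinate_of_locallyFinite isClosed_univ U' hopen
    (locallyFinite_of_finite U') hcover.ge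
  let c := Set.Infinite.natEmbedding (Ioo (0 : ℝ) 1) (Ioo_infinite zero_lt_one)
  let W k := thresholdPiece ρ (c k)
  have hWo k i : IsOpen (W k i) := isOpen_thresholdPiece _ _ _
  have hWd k : Pairwise (Function.onFun Disjoint (W k)) :=
    pairwise_disjoint_thresholdPiece ρ.nonneg _
  have hWU k i : W k i ⊆ U' i :=
    (thresholdPiece_subset_support _ _ _).trans (subset_tsupport _ |>.trans (hρU i))
  refine ⟨extendFin U' fun k => ⋃ i, W k i, fun k => ?_, fun k hk => dif_pos hk,
    fun k hk => ⟨W k, hWo k, hWd k, hWU k, dif_neg (not_le.2 hk)⟩,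
    fun m _ => ⟨?_, fun s _ hs => iUnion_extendFin_thresholdPiece_eq_univ ρ hρU c hs⟩⟩
  · unfold extendFin
    split_ifs
    exacts [hopen _, isOpen_iUnion (hWo k)]
  · exact (hunif.extendFin (hunif.iUnion_of_pairwise_disjoint hWo hWd hWU)).comp Fin.val

/-- Theorem 2.5 (uniformly `f`-contractible case): a uniformly `f`-contractible open cover
`U'₀, …, U'ₙ` of a path-connected normal space `X` extends to an infinite open
`(n+1)`-cover `(U_k)` of `X` with `U_k = U'_k` for `k ≤ n` such that each finite
subfamily `U₀, …, U_m` with `m ≥ n` is a uniformly `f`-contractible `(n+1)`-cover of `X`;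
moreover each `U_k` with `k > n` is a disjoint union `V₀ ∪ ⋯ ∪ Vₙ` of open sets with
`V_i ⊆ U'_i`. -/
theorem exists_infinite_unifContractible_nSuccCover_extension
    {X Y : Type*} [TopologicalSpace X] [TopologicalSpace Y] [NormalSpace X]
    [PathConnectedSpace X] (f : X → Y) (hf : Continuous f)
    (n : ℕ) (U' : Fin (n + 1) → Set X)
    (hopen : ∀ i, IsOpen (U' i)) (hcover : ⋃ i, U' i = univ)
    (hunif : UnifContractible f U') :
    ∃ U : ℕ → Set X,
      (∀ k, IsOpen (U k)) ∧
      (∀ k : ℕ, ∀ hk : k ≤ n, U k = U' ⟨k, Nat.lt_succ_of_le hk⟩) ∧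
      (∀ k : ℕ, n < k → ∃ V : Fin (n + 1) → Set X,
        (∀ i, IsOpen (V i)) ∧ Pairwise (Function.onFun Disjoint V) ∧
        (∀ i, V i ⊆ U' i) ∧ U k = ⋃ i, V i) ∧
      (∀ m : ℕ, n ≤ m →
        UnifContractible f (fun i : Fin (m + 1) => U i) ∧
        (∀ s : Finset ℕ, (∀ k ∈ s, k ≤ m) → s.card = n + 1 → ⋃ k ∈ s, U k = univ)) :=
  exists_infinite_unifContractible_nSuccCover_extension_general f n U' hopen hcover hunif
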